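/- In the GDNC setup, assume the row space of [I_k | P] is an (n,k) MDS code, i.e., has minimum distance M·k2 + 1. Let S_all be the set of all faults, so that P_{S_all} is the block-diagonal matrix that keeps exactly those entries P[r,c] with cb(c) = rb(r) and replaces all other entries by 0. Then d_min(C(S_all)) = k2 + 1. -/

import Mathlib

open Matrix

/-- The minimum Hamming distance of a linear code: the minimum Hamming weight of a
nonzero codeword. -/
noncomputable def dmin {F : Type*} [Field F] [DecidableEq F] {ι : Type*} [Fintype ι]
    (C : Submodule F (ι → F)) : ℕ :=
  sInf {d | ∃ x ∈ C, x ≠ 0 ∧ hammingNorm x = d}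

/-- The row space of a matrix, i.e. the linear code generated by its rows. -/
def rowSpace {F : Type*} [Field F] {κ ι : Type*} (G : Matrix κ ι F) :
    Submodule F (ι → F) :=
  Submodule.span F (Set.range fun i => G i)

/-- The systematic generator matrix `[I_k | P]`. -/
def sysGen {F : Type*} [Field F] [DecidableEq F] {k m : ℕ}
    (P : Matrix (Fin k) (Fin m) F) : Matrix (Fin k) (Fin k ⊕ Fin m) F :=
  Matrix.fromCols 1 P

/-- GDNC setup: row `r` of `P` belongs to user block `r / k1`, column `c` to user
block `c / k2`.  A fault `(i, r)` (with `i < M` and `i ≠ r / k1`) zeroes the entries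
of row `r` lying in column block `i`.  `faultyP M k1 k2 P S` is the faulty parity
matrix `P_S` resulting from the set of faults `S`. -/
def faultyP {F : Type*} [Field F] (M k1 k2 : ℕ)
    (P : Matrix (Fin (M * k1)) (Fin (M * k2)) F)
    (S : Finset (ℕ × Fin (M * k1))) : Matrix (Fin (M * k1)) (Fin (M * k2)) F :=
  fun r c => if ((c : ℕ) / k2, r) ∈ S then 0 else P r c

/-- `S` is a set of faults: each element `(i, r)` has `i ∈ {0, …, M−1}` a user index
different from the block `r / k1` of row `r`. -/
def IsFaultSet (M k1 : ℕ) (S : Finset (ℕ × Fin (M * k1))) : Prop :=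
  ∀ p ∈ S, p.1 < M ∧ (p.2 : ℕ) / k1 ≠ p.1

section Aux

variable {F : Type*} [Field F] [DecidableEq F]

lemma hammingNorm_sumElim {α β : Type*} [Fintype α] [Fintype β]
    (a : α → F) (b : β → F) :
    hammingNorm (Sum.elim a b) = hammingNorm a + hammingNorm b := by
  classical
  simp only [hammingNorm, Finset.card_filter]
  rw [Fintype.sum_sum_type]
  simp
  congr 1 <;> refine Finset.sum_congr rfl fun x _ => ?_ <;> split_ifs <;> simp_all

lemma card_block (M k2 : ℕ) (hk2 : 1 ≤ k2) (i : ℕ) (hi : i < M) :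
    (Finset.univ.filter fun c : Fin (M * k2) => (c : ℕ) / k2 = i).card = k2 := by
  rw [Finset.card_filter, Fin.sum_univ_eq_sum_range (fun c => if c / k2 = i then 1 else 0),
    ← Finset.card_filter]
  have h : (Finset.range (M * k2)).filter (fun c => c / k2 = i)
      = Finset.Ico (i * k2) ((i + 1) * k2) := by
    ext c
    simp only [Finset.mem_filter, Finset.mem_range, Finset.mem_Ico]
    constructor
    · rintro ⟨hc, rfl⟩
      refine ⟨Nat.div_mul_le_self c k2, ?_⟩
      exact (Nat.div_lt_iff_lt_mul hk2).mp (Nat.lt_succ_self _)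
    · rintro ⟨h1, h2⟩
      have hle : i ≤ c / k2 := (Nat.le_div_iff_mul_le hk2).mpr h1
      have hlt : c / k2 < i + 1 := (Nat.div_lt_iff_lt_mul hk2).mpr h2
      exact ⟨lt_of_lt_of_le h2 (Nat.mul_le_mul_right _ hi), by omega⟩
  rw [h, Nat.card_Ico, Nat.succ_mul, Nat.add_sub_cancel_left]

lemma mem_rowSpace_iff {k : ℕ} {ι : Type*} (G : Matrix (Fin k) ι F) (x : ι → F) :
    x ∈ rowSpace G ↔ ∃ y, y ᵥ* G = x := by
  rw [rowSpace]
  have h : (Set.range fun i => G i) = Set.range G.row := rfl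
  rw [h, ← range_vecMulLinear]
  simp [LinearMap.mem_range, Matrix.vecMulLinear_apply]

lemma hammingNorm_oneRow {k : ℕ} (r : Fin k) :
    hammingNorm (fun j => (1 : Matrix (Fin k) (Fin k) F) r j) = 1 := by
  classical
  have h : (Finset.univ.filter fun j : Fin k =>
      (1 : Matrix (Fin k) (Fin k) F) r j ≠ 0) = {r} := by
    ext j
    by_cases hrj : r = j <;> simp [Matrix.one_apply, hrj, eq_comm]
  simp only [hammingNorm]
  rw [show ({j | (1 : Matrix (Fin k) (Fin k) F) r j ≠ 0} : Finset (Fin k)) =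
    (Finset.univ.filter fun j : Fin k => (1 : Matrix (Fin k) (Fin k) F) r j ≠ 0) from rfl,
    h, Finset.card_singleton]

end Aux

lemma hammingNorm_eq_card {F : Type*} [Field F] [DecidableEq F] {ι : Type*} [Fintype ι]
    (x : ι → F) : hammingNorm x = (Finset.univ.filter fun i => x i ≠ 0).card := rfl

/-- When all possible faults occur (so that `P_S` is block diagonal, keeping exactly
the entries with `cb(c) = rb(r)`), the resulting code has minimum distance `k2 + 1`. -/
theorem dmin_all_faults {F : Type*} [Field F] [DecidableEq F]
    (M k1 k2 : ℕ) (hM : 1 ≤ M) (hk1 : 1 ≤ k1) (hk2 : 1 ≤ k2)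
    (P : Matrix (Fin (M * k1)) (Fin (M * k2)) F)
    (hMDS : dmin (rowSpace (sysGen P)) = M * k2 + 1) :
    let Sall : Finset (ℕ × Fin (M * k1)) :=
      (Finset.range M ×ˢ Finset.univ).filter fun p => (p.2 : ℕ) / k1 ≠ p.1
    dmin (rowSpace (sysGen (faultyP M k1 k2 P Sall))) = k2 + 1 := by
  classical
  intro Sall
  set Q : Matrix (Fin (M * k1)) (Fin (M * k2)) F := faultyP M k1 k2 P Sall with hQdef
  -- every nonzero message gives a codeword of the big code of weight ≥ M*k2+1
  have hbig : ∀ y : Fin (M * k1) → F, y ≠ 0 →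
      M * k2 + 1 ≤ hammingNorm y + hammingNorm (y ᵥ* P) := by
    intro y hy
    have hx : Sum.elim y (y ᵥ* P) ∈ rowSpace (sysGen P) := by
      rw [mem_rowSpace_iff]
      exact ⟨y, by rw [sysGen, Matrix.vecMul_fromCols, Matrix.vecMul_one]⟩
    have hx0 : Sum.elim y (y ᵥ* P) ≠ 0 := by
      intro h
      apply hy
      funext r
      have := congrFun h (Sum.inl r)
      simpa using this
    have hmem : hammingNorm (Sum.elim y (y ᵥ* P)) ∈
        {d | ∃ x ∈ rowSpace (sysGen P), x ≠ 0 ∧ hammingNorm x = d} := ⟨_, hx, hx0, rfl⟩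
    have h : dmin (rowSpace (sysGen P)) ≤ hammingNorm (Sum.elim y (y ᵥ* P)) :=
      Nat.sInf_le hmem
    rwa [hMDS, hammingNorm_sumElim] at h
  -- all entries of P are nonzero (from MDS)
  have hPne : ∀ r c, P r c ≠ 0 := by
    intro r c
    set e : Fin (M * k1) → F := Pi.single r (1 : F) with hedef
    have hsne : e ≠ 0 := by
      intro h
      have := congrFun h r
      simp [hedef] at this
    have h1 : hammingNorm e = 1 := by
      rw [hammingNorm_eq_card]
      have h : (Finset.univ.filter fun j : Fin (M * k1) => e j ≠ 0)
          = {r} := by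
        ext j
        by_cases hj : j = r <;> simp [hedef, Pi.single_apply, hj]
      rw [h, Finset.card_singleton]
    have h2 := hbig e hsne
    rw [hedef] at h2
    rw [Matrix.single_one_vecMul, h1] at h2
    have h3 : M * k2 ≤ hammingNorm (P r) := by rw [show P r = P.row r from rfl]; omega
    rw [hammingNorm_eq_card] at h3
    have h4 : (Finset.univ.filter fun c : Fin (M * k2) => P r c ≠ 0) = Finset.univ := by
      apply Finset.eq_univ_of_card
      refine le_antisymm (Finset.card_le_univ _) ?_
      simpa [Finset.card_univ] using h3
    have h5 : c ∈ Finset.univ.filter fun c : Fin (M * k2) => P r c ≠ 0 := by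
      rw [h4]; exact Finset.mem_univ c
    exact (Finset.mem_filter.mp h5).2
  have hcM : ∀ c : Fin (M * k2), (c : ℕ) / k2 < M := fun c =>
    (Nat.div_lt_iff_lt_mul hk2).mpr c.isLt
  -- description of the faulty matrix
  have hQ : ∀ (r : Fin (M * k1)) (c : Fin (M * k2)),
      Q r c = if (r : ℕ) / k1 = (c : ℕ) / k2 then P r c else 0 := by
    intro r c
    show (if ((c : ℕ) / k2, r) ∈ Sall then 0 else P r c) = _
    have hmem : (((c : ℕ) / k2, r) ∈ Sall) ↔ (r : ℕ) / k1 ≠ (c : ℕ) / k2 := by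
      have hS : Sall = (Finset.range M ×ˢ (Finset.univ : Finset (Fin (M * k1)))).filter
          (fun p => (p.2 : ℕ) / k1 ≠ p.1) := rfl
      rw [hS]
      simp [Finset.mem_filter, Finset.mem_product, Finset.mem_range, hcM c]
    by_cases h : (r : ℕ) / k1 = (c : ℕ) / k2
    · rw [if_neg (fun hc => (hmem.mp hc) h), if_pos h]
    · rw [if_pos (hmem.mpr h), if_neg h]
  -- the low-weight codeword: row 0 of the faulty generator matrix
  have hMk1 : 0 < M * k1 := Nat.mul_pos hM hk1
  set r0 : Fin (M * k1) := ⟨0, hMk1⟩ with hr0def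
  have hxmem : sysGen Q r0 ∈ rowSpace (sysGen Q) := Submodule.subset_span ⟨r0, rfl⟩
  have hxelim : sysGen Q r0
      = Sum.elim (fun j => (1 : Matrix (Fin (M * k1)) (Fin (M * k1)) F) r0 j) (Q r0) := by
    funext j; cases j <;> rfl
  have hone : sysGen Q r0 (Sum.inl r0) = 1 := by
    show (1 : Matrix (Fin (M * k1)) (Fin (M * k1)) F) r0 r0 = 1
    simp [Matrix.one_apply]
  have hx0 : sysGen Q r0 ≠ 0 := by
    intro h
    rw [h] at hone
    simpa using hone
  have hnormrow : hammingNorm (sysGen Q r0) = k2 + 1 := by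
    rw [hxelim, hammingNorm_sumElim, hammingNorm_oneRow]
    have h0 : ((r0 : ℕ)) / k1 = 0 := by simp [hr0def]
    have hfe : (Finset.univ.filter fun c : Fin (M * k2) => Q r0 c ≠ 0)
        = Finset.univ.filter fun c : Fin (M * k2) => (c : ℕ) / k2 = 0 := by
      ext c
      simp only [Finset.mem_filter, Finset.mem_univ, true_and]
      rw [hQ r0 c, h0]
      constructor
      · intro h
        by_contra hc
        rw [if_neg (fun he => hc he.symm)] at h
        exact h rfl
      · intro h
        rw [if_pos h.symm]
        exact hPne r0 c
    rw [hammingNorm_eq_card, hfe, card_block M k2 hk2 0 (by omega)]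
    omega
  apply le_antisymm
  · exact Nat.sInf_le ⟨sysGen Q r0, hxmem, hx0, hnormrow⟩
  · refine le_csInf ⟨k2 + 1, ⟨sysGen Q r0, hxmem, hx0, hnormrow⟩⟩ ?_
    rintro d ⟨x, hxm, hxne, rfl⟩
    obtain ⟨y, rfl⟩ := (mem_rowSpace_iff _ _).mp hxm
    have hy0 : y ≠ 0 := by
      rintro rfl
      exact hxne (Matrix.zero_vecMul _)
    obtain ⟨r1, hr1⟩ := Function.ne_iff.mp hy0
    simp only [Pi.zero_apply] at hr1
    set i : ℕ := (r1 : ℕ) / k1 with hidef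
    have hi : i < M := (Nat.div_lt_iff_lt_mul hk1).mpr r1.isLt
    set z : Fin (M * k1) → F := fun r => if (r : ℕ) / k1 = i then y r else 0 with hzdef
    have hz0 : z ≠ 0 := by
      intro h
      apply hr1
      have h1 := congrFun h r1
      simpa [hzdef, hidef] using h1
    have h1 := hbig z hz0
    have hxeq : y ᵥ* sysGen Q = Sum.elim y (y ᵥ* Q) := by
      rw [sysGen, Matrix.vecMul_fromCols, Matrix.vecMul_one]
    rw [hxeq, hammingNorm_sumElim]
    have h3 : hammingNorm z ≤ hammingNorm y := by
      rw [hammingNorm_eq_card, hammingNorm_eq_card]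
      apply Finset.card_le_card
      intro r hr
      simp only [Finset.mem_filter, Finset.mem_univ, true_and] at hr ⊢
      intro h
      apply hr
      rw [hzdef]
      simp [h]
    have key : ∀ c : Fin (M * k2), (c : ℕ) / k2 = i → (y ᵥ* Q) c = (z ᵥ* P) c := by
      intro c hc
      simp only [Matrix.vecMul, dotProduct]
      apply Finset.sum_congr rfl
      intro r _
      show y r * Q r c = z r * P r c
      rw [hQ r c, hc, hzdef]
      by_cases h : (r : ℕ) / k1 = i <;> simp [h]
    set A := Finset.univ.filter fun c : Fin (M * k2) => (z ᵥ* P) c ≠ 0 ∧ (c : ℕ) / k2 = i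
      with hA
    set B := Finset.univ.filter fun c : Fin (M * k2) => (z ᵥ* P) c ≠ 0 ∧ ¬((c : ℕ) / k2 = i)
      with hB
    have h5 : A.card + B.card = hammingNorm (z ᵥ* P) := by
      rw [hammingNorm_eq_card, hA, hB, ← Finset.filter_filter, ← Finset.filter_filter]
      exact Finset.card_filter_add_card_filter_not _
    have h4 : A.card ≤ hammingNorm (y ᵥ* Q) := by
      rw [hammingNorm_eq_card]
      apply Finset.card_le_card
      intro c hcmem
      simp only [hA, Finset.mem_filter, Finset.mem_univ, true_and] at hcmem ⊢
      rw [key c hcmem.2]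
      exact hcmem.1
    have h6 : B.card + k2 ≤ M * k2 := by
      have hsub : B ⊆ Finset.univ.filter fun c : Fin (M * k2) => ¬((c : ℕ) / k2 = i) := by
        intro c hcmem
        simp only [hB, Finset.mem_filter] at hcmem ⊢
        exact ⟨hcmem.1, hcmem.2.2⟩
      have hcard := Finset.card_le_card hsub
      have htot : (Finset.univ.filter fun c : Fin (M * k2) => (c : ℕ) / k2 = i).card
          + (Finset.univ.filter fun c : Fin (M * k2) => ¬((c : ℕ) / k2 = i)).card
          = M * k2 := by
        rw [Finset.card_filter_add_card_filter_not, Finset.card_univ, Fintype.card_fin]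
      rw [card_block M k2 hk2 i hi] at htot
      omega
    omega
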